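/- Let 1 < i < n and suppose a simple connected graph G on n vertices realizes S_{{i,n}_n^1}. Then every vertex of G has degree at least 2 and at most n−3; in particular, G has no pendant vertex (vertex of degree one). -/

import Mathlib

open SimpleGraph

/-- The join of two graphs: disjoint union plus all edges between the two parts. -/
def graphJoin {α β : Type} (G : SimpleGraph α) (H : SimpleGraph β) :
    SimpleGraph (α ⊕ β) where
  Adj u v := match u, v with
    | Sum.inl u, Sum.inl v => G.Adj u v
    | Sum.inr u, Sum.inr v => H.Adj u v
    | Sum.inl _, Sum.inr _ => True
    | Sum.inr _, Sum.inl _ => True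
  symm := ⟨fun u v => by cases u <;> cases v <;> simp [G.adj_symm, H.adj_symm] <;> exact fun h => h.symm⟩
  loopless := ⟨fun u => by cases u <;> simp⟩

/-- The Laplacian spectrum of a finite graph, as the multiset of roots (with multiplicity)
of the characteristic polynomial of its Laplacian matrix over `ℝ`. -/
noncomputable def lapSpec {V : Type} [Fintype V] [DecidableEq V] (G : SimpleGraph V) :
    Multiset ℝ :=
  letI := Classical.decRel G.Adj
  (G.lapMatrix ℝ).charpoly.roots

/-- `G` realizes the multiset `s` if `G` is connected and its Laplacian spectrum is `s`. -/
def Realizes {V : Type} [Fintype V] [DecidableEq V] (G : SimpleGraph V) (s : Multiset ℝ) :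
    Prop :=
  G.Connected ∧ lapSpec G = s

/-- The multiset `S_{{i,j}_n^m}`: `{0,1,…,n}` with the element `m` doubled and `i`, `j` removed. -/
noncomputable def SijSet (n i j m : ℕ) : Multiset ℝ :=
  (m : ℝ) ::ₘ (((Multiset.range (n + 1)).map (fun k => (k : ℝ))) - {(i : ℝ), (j : ℝ)})

/-- The multiset `S_{i,n} = {0,1,…,n} \ {i}`. -/
noncomputable def SinSet (i n : ℕ) : Multiset ℝ :=
  ((Multiset.range (n + 1)).map (fun k => (k : ℝ))) - {(i : ℝ)}

/-- The set `S_{{i,j}_n^m}` is Laplacian realizable. -/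
def LapRealizable (n i j m : ℕ) : Prop :=
  ∃ G : SimpleGraph (Fin n), Realizes G (SijSet n i j m)

/-!
The Laplacian spectrum `{0, 1, 1, 2, …, n - 1} \ {i}` consists of integers below `n`, and `0` is
simple because `G` is connected. Expanding in an orthonormal eigenbasis, the Laplacian quadratic
form is therefore at most `(n - 1) ‖x‖²`, and at least `‖x‖²` on vectors orthogonal to the
constants. Both bounds are tested on vectors equal to `-1` off one or two vertices:
`n e_v - 1` shows that no vertex is universal; `(n - 1) e_v + e_w - 1` shows that a vertex `v` of
degree `n - 2` would leave its non-neighbour `w` isolated, and that a pendant vertex `v` would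
make its neighbour `w` universal.
-/

open Matrix

namespace Matrix.IsHermitian

variable {n : Type*} [Fintype n] [DecidableEq n] {A : Matrix n n ℝ}

lemma eigenvectorBasis_dotProduct_mulVec (hA : A.IsHermitian) (k : n) (x : n → ℝ) :
    ⇑(hA.eigenvectorBasis k) ⬝ᵥ A *ᵥ x =
      hA.eigenvalues k * (⇑(hA.eigenvectorBasis k) ⬝ᵥ x) := by
  rw [dotProduct_mulVec, ← mulVec_transpose, ← conjTranspose_eq_transpose_of_trivial, hA.eq,
    mulVec_eigenvectorBasis, smul_dotProduct, smul_eq_mul, dotProduct_comm]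

lemma sum_eigenvectorBasis_dotProduct_mul (hA : A.IsHermitian) (x y : n → ℝ) :
    ∑ k, (⇑(hA.eigenvectorBasis k) ⬝ᵥ x) * (⇑(hA.eigenvectorBasis k) ⬝ᵥ y) = x ⬝ᵥ y := by
  have := hA.eigenvectorBasis.sum_inner_mul_inner (WithLp.toLp 2 x) (WithLp.toLp 2 y)
  simp only [EuclideanSpace.inner_eq_star_dotProduct, star_trivial] at this
  simpa [dotProduct_comm] using this

lemma dotProduct_self_eq_sum (hA : A.IsHermitian) (x : n → ℝ) :
    x ⬝ᵥ x = ∑ k, (⇑(hA.eigenvectorBasis k) ⬝ᵥ x) ^ 2 := by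
  simp only [sq, hA.sum_eigenvectorBasis_dotProduct_mul]

lemma dotProduct_mulVec_eq_sum (hA : A.IsHermitian) (x : n → ℝ) :
    x ⬝ᵥ A *ᵥ x = ∑ k, hA.eigenvalues k * (⇑(hA.eigenvectorBasis k) ⬝ᵥ x) ^ 2 := by
  rw [← hA.sum_eigenvectorBasis_dotProduct_mul]
  simp only [eigenvectorBasis_dotProduct_mulVec]
  exact Finset.sum_congr rfl fun k _ => by ring

lemma eigenvalues_mem_roots_charpoly (hA : A.IsHermitian) (k : n) :
    hA.eigenvalues k ∈ A.charpoly.roots := by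
  rw [hA.roots_charpoly_eq_eigenvalues]
  exact Multiset.mem_map_of_mem _ (Finset.mem_univ k)

lemma dotProduct_mulVec_le (hA : A.IsHermitian) {c : ℝ} (h : ∀ r ∈ A.charpoly.roots, r ≤ c)
    (x : n → ℝ) :
    x ⬝ᵥ A *ᵥ x ≤ c * (x ⬝ᵥ x) := by
  rw [hA.dotProduct_mulVec_eq_sum, hA.dotProduct_self_eq_sum, Finset.mul_sum]
  exact Finset.sum_le_sum fun k _ =>
    mul_le_mul_of_nonneg_right (h _ (hA.eigenvalues_mem_roots_charpoly k)) (sq_nonneg _)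

lemma le_dotProduct_mulVec (hA : A.IsHermitian) {c : ℝ} (x : n → ℝ)
    (h : ∀ k, c ≤ hA.eigenvalues k ∨ ⇑(hA.eigenvectorBasis k) ⬝ᵥ x = 0) :
    c * (x ⬝ᵥ x) ≤ x ⬝ᵥ A *ᵥ x := by
  rw [hA.dotProduct_mulVec_eq_sum, hA.dotProduct_self_eq_sum, Finset.mul_sum]
  refine Finset.sum_le_sum fun k _ => ?_
  rcases h k with hk | hk
  · exact mul_le_mul_of_nonneg_right hk (sq_nonneg _)
  · simp [hk]

end Matrix.IsHermitian

section TestVector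

variable {V : Type*} [Fintype V] [DecidableEq V] (a b : V) (c d : ℝ)

lemma sum_single_add_single_sub_one :
    ∑ w, (Pi.single a c + Pi.single b d - 1 : V → ℝ) w = c + d - Fintype.card V := by
  simp [Finset.sum_add_distrib, Finset.sum_sub_distrib]

lemma dotProduct_self_single_add_single_sub_one (hab : a ≠ b) :
    (Pi.single a c + Pi.single b d - 1 : V → ℝ) ⬝ᵥ (Pi.single a c + Pi.single b d - 1) =
      c ^ 2 + d ^ 2 - 2 * c - 2 * d + Fintype.card V := by
  have hx : (Pi.single a c + Pi.single b d - 1 : V → ℝ) ⬝ᵥ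
      (Pi.single a c + Pi.single b d - 1) =
        (Pi.single a c + Pi.single b d) ⬝ᵥ (Pi.single a c + Pi.single b d)
          - 2 * (c + d) + Fintype.card V := by
    simp only [sub_dotProduct, dotProduct_sub, dotProduct_one, one_dotProduct]
    simp only [dotProduct, Pi.add_apply, Pi.sub_apply, Pi.one_apply, Finset.sum_add_distrib,
      Finset.sum_sub_distrib, Finset.sum_pi_single', Finset.mem_univ, if_true, Finset.sum_const,
      Finset.card_univ, nsmul_eq_mul, mul_one]
    ring
  rw [hx]
  simp only [dotProduct_add, dotProduct_single, Pi.add_apply, Pi.single_eq_same,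
    Pi.single_eq_of_ne hab, Pi.single_eq_of_ne hab.symm, add_zero, zero_add]
  ring

lemma Matrix.IsSymm.dotProduct_mulVec_single_add_single_sub_one {A : Matrix V V ℝ}
    (hA : A.IsSymm) (h1 : A *ᵥ 1 = 0) :
    (Pi.single a c + Pi.single b d - 1 : V → ℝ) ⬝ᵥ A *ᵥ (Pi.single a c + Pi.single b d - 1) =
      c ^ 2 * A a a + 2 * c * d * A a b + d ^ 2 * A b b := by
  have h1' : (1 : V → ℝ) ᵥ* A = 0 := by rw [← mulVec_transpose, hA.eq, h1]
  rw [mulVec_sub, h1, sub_zero, sub_dotProduct, dotProduct_mulVec 1, h1', zero_dotProduct,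
    sub_zero]
  simp only [mulVec_add, mulVec_single, add_dotProduct, dotProduct_add, single_dotProduct,
    Pi.smul_apply, col_apply, op_smul_eq_mul, hA.apply a b]
  ring

end TestVector

namespace SimpleGraph

variable {V : Type*} [Fintype V] [DecidableEq V] (G : SimpleGraph V) [DecidableRel G.Adj]

lemma lapMatrix_apply_self (a : V) : G.lapMatrix ℝ a a = G.degree a := by
  simp [lapMatrix, degMatrix]

lemma lapMatrix_apply_of_ne {a b : V} (hab : a ≠ b) :
    G.lapMatrix ℝ a b = if G.Adj a b then -1 else 0 := by
  by_cases h : G.Adj a b <;> simp [lapMatrix, degMatrix, hab, h]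

lemma dotProduct_lapMatrix_mulVec_single_add_single_sub_one (a b : V) (c d : ℝ) :
    (Pi.single a c + Pi.single b d - 1 : V → ℝ) ⬝ᵥ
        G.lapMatrix ℝ *ᵥ (Pi.single a c + Pi.single b d - 1) =
      c ^ 2 * G.degree a + 2 * c * d * G.lapMatrix ℝ a b + d ^ 2 * G.degree b := by
  rw [(G.isSymm_lapMatrix (R := ℝ)).dotProduct_mulVec_single_add_single_sub_one a b c d
    G.lapMatrix_mulVec_const_eq_zero, lapMatrix_apply_self, lapMatrix_apply_self]

lemma dotProduct_eq_zero_of_lapMatrix_mulVec_eq_zero (hG : G.Connected) {u x : V → ℝ}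
    (hu : G.lapMatrix ℝ *ᵥ u = 0) (hx : ∑ i, x i = 0) : u ⬝ᵥ x = 0 := by
  obtain ⟨v⟩ := hG.nonempty
  have hconst : ∀ i, u i = u v := fun i =>
    G.lapMatrix_mulVec_eq_zero_iff_forall_reachable.mp hu i v (hG.preconnected i v)
  simp only [dotProduct, hconst, ← Finset.mul_sum, hx, mul_zero]

lemma le_dotProduct_lapMatrix_mulVec (hG : G.Connected) {c : ℝ}
    (h : ∀ r ∈ (G.lapMatrix ℝ).charpoly.roots, r = 0 ∨ c ≤ r) {x : V → ℝ}
    (hx : ∑ i, x i = 0) :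
    c * (x ⬝ᵥ x) ≤ x ⬝ᵥ G.lapMatrix ℝ *ᵥ x := by
  have hL := G.isHermitian_lapMatrix (R := ℝ)
  refine hL.le_dotProduct_mulVec x fun k => ?_
  refine (h _ (hL.eigenvalues_mem_roots_charpoly k)).symm.imp id fun h0 => ?_
  refine G.dotProduct_eq_zero_of_lapMatrix_mulVec_eq_zero hG ?_ hx
  rw [hL.mulVec_eigenvectorBasis, h0, zero_smul]

lemma degree_add_two_le_card [Nontrivial V]
    (h : ∀ r ∈ (G.lapMatrix ℝ).charpoly.roots, r ≤ Fintype.card V - 1) (v : V) :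
    G.degree v + 2 ≤ Fintype.card V := by
  obtain ⟨w, hwv⟩ := exists_ne v
  have hq := (G.isHermitian_lapMatrix (R := ℝ)).dotProduct_mulVec_le h
    (Pi.single v (Fintype.card V : ℝ) + Pi.single w 0 - 1)
  rw [dotProduct_lapMatrix_mulVec_single_add_single_sub_one,
    dotProduct_self_single_add_single_sub_one _ _ _ _ hwv.symm] at hq
  by_contra hcon
  have hdeg : (G.degree v : ℝ) + 1 = Fintype.card V := by
    have := G.degree_lt_card_verts v
    exact_mod_cast (by omega : G.degree v + 1 = Fintype.card V)
  have hN : (2 : ℝ) ≤ Fintype.card V := by exact_mod_cast Fintype.one_lt_card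
  nlinarith

lemma degree_eq_zero_of_degree_add_two_eq_card
    (h : ∀ r ∈ (G.lapMatrix ℝ).charpoly.roots, r ≤ Fintype.card V - 1) {v w : V}
    (hvw : v ≠ w) (hadj : ¬ G.Adj v w) (hv : G.degree v + 2 = Fintype.card V) : G.degree w = 0 := by
  have hq := (G.isHermitian_lapMatrix (R := ℝ)).dotProduct_mulVec_le h
    (Pi.single v (Fintype.card V - 1 : ℝ) + Pi.single w 1 - 1)
  rw [dotProduct_lapMatrix_mulVec_single_add_single_sub_one,
    dotProduct_self_single_add_single_sub_one _ _ _ _ hvw, lapMatrix_apply_of_ne _ hvw,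
    if_neg hadj] at hq
  have hdeg : (G.degree v : ℝ) + 2 = Fintype.card V := by exact_mod_cast hv
  have : (G.degree w : ℝ) ≤ 0 := by nlinarith
  exact_mod_cast this.antisymm (Nat.cast_nonneg _)

lemma degree_add_one_eq_card_of_degree_eq_one (hG : G.Connected)
    (h : ∀ r ∈ (G.lapMatrix ℝ).charpoly.roots, r = 0 ∨ 1 ≤ r) {v u : V} (hvu : G.Adj v u)
    (hv : G.degree v = 1) : G.degree u + 1 = Fintype.card V := by
  have hq := G.le_dotProduct_lapMatrix_mulVec hG h
    (x := Pi.single v (Fintype.card V - 1 : ℝ) + Pi.single u 1 - 1)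
    (by rw [sum_single_add_single_sub_one]; ring)
  rw [dotProduct_lapMatrix_mulVec_single_add_single_sub_one,
    dotProduct_self_single_add_single_sub_one _ _ _ _ hvu.ne, lapMatrix_apply_of_ne _ hvu.ne,
    if_pos hvu, hv] at hq
  have hlt := G.degree_lt_card_verts u
  have : (Fintype.card V : ℝ) ≤ G.degree u + 1 := by push_cast at hq; nlinarith
  have : Fintype.card V ≤ G.degree u + 1 := by exact_mod_cast this
  omega

lemma one_lt_degree [Nontrivial V] (hG : G.Connected)
    (hlow : ∀ r ∈ (G.lapMatrix ℝ).charpoly.roots, r = 0 ∨ 1 ≤ r)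
    (hup : ∀ r ∈ (G.lapMatrix ℝ).charpoly.roots, r ≤ Fintype.card V - 1) (v : V) :
    1 < G.degree v := by
  obtain ⟨u, hvu⟩ :=
    G.degree_pos_iff_exists_adj v |>.mp (hG.preconnected.degree_pos_of_nontrivial v)
  have hu := G.degree_add_two_le_card hup u
  have : G.degree v ≠ 1 := fun hv => by
    have := G.degree_add_one_eq_card_of_degree_eq_one hG hlow hvu hv
    omega
  have := hvu.degree_pos_left
  omega

lemma degree_add_three_le_card [Nontrivial V] (hG : G.Connected)
    (hup : ∀ r ∈ (G.lapMatrix ℝ).charpoly.roots, r ≤ Fintype.card V - 1) (v : V) :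
    G.degree v + 3 ≤ Fintype.card V := by
  have hv := G.degree_add_two_le_card hup v
  refine Nat.lt_of_le_of_ne hv fun hv => ?_
  obtain ⟨w, hvw, hadj⟩ : ∃ w, v ≠ w ∧ ¬ G.Adj v w := by
    simpa [IsUniversal] using (G.degree_lt_card_sub_one v).mp (by omega)
  exact (hG.preconnected.degree_pos_of_nontrivial w).ne' <|
    G.degree_eq_zero_of_degree_add_two_eq_card hup hvw hadj hv

end SimpleGraph

lemma lapSpec_eq_roots_charpoly {V : Type} [Fintype V] [DecidableEq V] (G : SimpleGraph V)
    [DecidableRel G.Adj] : lapSpec G = (G.lapMatrix ℝ).charpoly.roots := by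
  unfold lapSpec
  congr!

lemma exists_natCast_lt_of_mem_SijSet {n i : ℕ} (hn : 1 < n) {r : ℝ}
    (hr : r ∈ SijSet n i n 1) : ∃ k : ℕ, k < n ∧ r = k := by
  -- `SijSet` maps `fun k => (k : ℝ)` over the monadic lift of `Multiset.range (n + 1)` to `ℝ`
  have hS : SijSet n i n 1 =
      1 ::ₘ ((Multiset.range (n + 1)).map Nat.cast - {(i : ℝ), (n : ℝ)}) := by
    simp [SijSet]
  have hnodup : ((Multiset.range (n + 1)).map (Nat.cast : ℕ → ℝ)).Nodup :=
    (Multiset.nodup_range _).map Nat.cast_injective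
  rw [hS] at hr
  rcases Multiset.mem_cons.mp hr with rfl | hr
  · exact ⟨1, hn, by simp⟩
  obtain ⟨hrange, hin⟩ := (Multiset.mem_sub_of_nodup hnodup).mp hr
  obtain ⟨k, hk, rfl⟩ := Multiset.mem_map.mp hrange
  have hkn : k ≠ n := by rintro rfl; simp at hin
  exact ⟨k, by rw [Multiset.mem_range] at hk; omega, rfl⟩

/-- If `1 < i < n` and a graph `G` on `n` vertices realizes `S_{{i,n}_n^1}`, then every
vertex has degree at least `2` and at most `n - 3`; in particular there is no pendant
vertex. -/
theorem stmt8 {n i : ℕ} (h1 : 1 < i) (hin : i < n) (G : SimpleGraph (Fin n))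
    [DecidableRel G.Adj] (hG : Realizes G (SijSet n i n 1)) :
    (∀ v : Fin n, 2 ≤ G.degree v ∧ G.degree v ≤ n - 3) ∧
    ∀ v : Fin n, G.degree v ≠ 1 := by
  obtain ⟨hconn, hspec⟩ := hG
  have hn : 1 < n := by omega
  have : Nontrivial (Fin n) := Fin.nontrivial_iff_two_le.mpr hn
  have hroots : ∀ r ∈ (G.lapMatrix ℝ).charpoly.roots, ∃ k : ℕ, k < n ∧ r = k := by
    rw [← lapSpec_eq_roots_charpoly, hspec]
    exact fun r => exists_natCast_lt_of_mem_SijSet hn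
  have hlow : ∀ r ∈ (G.lapMatrix ℝ).charpoly.roots, r = 0 ∨ 1 ≤ r := by
    intro r hr
    obtain ⟨k, -, rfl⟩ := hroots r hr
    rcases k with _ | k <;> simp
  have hup : ∀ r ∈ (G.lapMatrix ℝ).charpoly.roots, r ≤ Fintype.card (Fin n) - 1 := by
    intro r hr
    obtain ⟨k, hk, rfl⟩ := hroots r hr
    have : (k : ℝ) + 1 ≤ n := by exact_mod_cast hk
    rw [Fintype.card_fin]
    linarith
  have hdeg := fun v => G.one_lt_degree hconn hlow hup v
  refine ⟨fun v => ⟨hdeg v, ?_⟩, fun v => (hdeg v).ne'⟩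
  have := G.degree_add_three_le_card hconn hup v
  simp only [Fintype.card_fin] at this
  omega
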